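/- arXiv:1807.03746 — 4 statements merged into one kernel-verified Lean document; each statement's English description precedes it below -/
import Mathlib

section
/- The ordered weighted ℓ1 function Ω_w(β) = Σ_{i=1}^N w_i |β|_{[i]}, where |β|_{[i]} denotes the i-th largest entry of β in absolute value and w_1 ≥ w_2 ≥ ... ≥ w_N ≥ 0 with w_1 > 0, is a norm on ℝ^N. -/
noncomputable def owlSorted {N : ℕ} (β : Fin N → ℝ) : Fin N → ℝ :=
  fun i => |β (Tuple.sort (fun j => |β j|) i.rev)|

noncomputable def owl {N : ℕ} (w β : Fin N → ℝ) : ℝ :=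
  ∑ i, w i * owlSorted β i

noncomputable def owlDual {M : ℕ} (v z : Fin M → ℝ) : ℝ :=
  ⨆ i : Fin M, (∑ j ∈ Finset.univ.filter (fun j => j ≤ i), v j)⁻¹ *
    ∑ j ∈ Finset.univ.filter (fun j => j ≤ i), owlSorted z j

/-!
`owlSorted β` lists `|β|` in decreasing order, so `owl w β` is `∑ w i |β (σ i)|` for a sorting
permutation `σ`. For antitone `w`, the rearrangement inequality says every other permutation gives
a smaller sum, so `owl w` is the maximum over permutations of the seminorms
`β ↦ ∑ w i |β (σ i)|`, and the triangle inequality follows termwise. Homogeneity holds because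
scaling by `|c|` keeps a sorted vector sorted, and definiteness because `w 0 > 0` weighs the
largest entry `‖β‖∞`.
-/

namespace Owl

open Finset

variable {N : ℕ}

noncomputable def sortPerm (β : Fin N → ℝ) : Equiv.Perm (Fin N) :=
  Fin.revPerm.trans (Tuple.sort fun j => |β j|)

lemma owlSorted_apply (β : Fin N → ℝ) (i : Fin N) : owlSorted β i = |β (sortPerm β i)| := rfl

lemma owlSorted_antitone (β : Fin N → ℝ) : Antitone (owlSorted β) :=
  fun _ _ hij => Tuple.monotone_sort (fun k => |β k|) (Fin.rev_le_rev.mpr hij)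

lemma abs_apply_eq_owlSorted (β : Fin N → ℝ) (k : Fin N) :
    |β k| = owlSorted β ((sortPerm β).symm k) := by
  rw [owlSorted_apply, Equiv.apply_symm_apply]

lemma abs_apply_le_owlSorted_zero (β : Fin (N + 1) → ℝ) (k : Fin (N + 1)) :
    |β k| ≤ owlSorted β 0 :=
  abs_apply_eq_owlSorted β k ▸ owlSorted_antitone β (Fin.zero_le _)

lemma owlSorted_smul (c : ℝ) (β : Fin N → ℝ) : owlSorted (c • β) = |c| • owlSorted β := by
  set f : Fin N → ℝ := fun j => |(c • β) j|
  have hf : f = |c| • fun j => |β j| := by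
    funext j
    simp [f, abs_mul]
  -- A monotone rearrangement is unique, so the sorting permutation of `|β|` also sorts `f`.
  have hsort : f ∘ Tuple.sort (fun j => |β j|) = f ∘ Tuple.sort f := by
    rw [Tuple.comp_sort_eq_comp_iff_monotone, hf]
    exact (Tuple.monotone_sort fun j => |β j|).const_smul (abs_nonneg c)
  funext i
  calc owlSorted (c • β) i = f (Tuple.sort f i.rev) := rfl
    _ = f (Tuple.sort (fun j => |β j|) i.rev) := (congrFun hsort i.rev).symm
    _ = (|c| • owlSorted β) i := by simp [f, owlSorted, abs_mul]

lemma owlSorted_zero : owlSorted (0 : Fin N → ℝ) = 0 := by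
  simpa using owlSorted_smul 0 (0 : Fin N → ℝ)

lemma owl_smul (w : Fin N → ℝ) (c : ℝ) (β : Fin N → ℝ) : owl w (c • β) = |c| * owl w β := by
  simp only [owl, owlSorted_smul, Pi.smul_apply, smul_eq_mul, mul_sum]
  exact sum_congr rfl fun i _ => mul_left_comm _ _ _

lemma sum_mul_abs_comp_perm_le_owl {w : Fin N → ℝ} (hw : Antitone w) (β : Fin N → ℝ)
    (σ : Equiv.Perm (Fin N)) : ∑ i, w i * |β (σ i)| ≤ owl w β := by
  have hβ : ∀ i, |β (σ i)| = owlSorted β ((σ.trans (sortPerm β).symm) i) :=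
    fun i => abs_apply_eq_owlSorted β (σ i)
  simp only [hβ]
  exact (hw.monovary (owlSorted_antitone β)).sum_mul_comp_perm_le_sum_mul

lemma owl_add_le {w : Fin N → ℝ} (hw : Antitone w) (hw₀ : ∀ i, 0 ≤ w i) (x y : Fin N → ℝ) :
    owl w (x + y) ≤ owl w x + owl w y := by
  set σ := sortPerm (x + y)
  calc owl w (x + y) = ∑ i, w i * |x (σ i) + y (σ i)| := rfl
    _ ≤ ∑ i, (w i * |x (σ i)| + w i * |y (σ i)|) := by
        gcongr with i
        rw [← mul_add]
        exact mul_le_mul_of_nonneg_left (abs_add_le _ _) (hw₀ i)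
    _ = ∑ i, w i * |x (σ i)| + ∑ i, w i * |y (σ i)| := sum_add_distrib
    _ ≤ owl w x + owl w y :=
        add_le_add (sum_mul_abs_comp_perm_le_owl hw x σ) (sum_mul_abs_comp_perm_le_owl hw y σ)

lemma owl_eq_zero_iff {w : Fin (N + 1) → ℝ} (hw₀ : ∀ i, 0 ≤ w i) (hw : 0 < w 0)
    (β : Fin (N + 1) → ℝ) : owl w β = 0 ↔ β = 0 := by
  refine ⟨fun h => ?_, fun h => by simp [h, owl, owlSorted_zero]⟩
  have hterms := (sum_eq_zero_iff_of_nonneg fun i _ => mul_nonneg (hw₀ i) (abs_nonneg _)).mp h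
  have hmax : owlSorted β 0 = 0 :=
    (mul_eq_zero.mp (hterms 0 (mem_univ 0))).resolve_left hw.ne'
  funext k
  exact abs_nonpos_iff.mp (hmax ▸ abs_apply_le_owlSorted_zero β k)

end Owl

theorem stmt_0 {N : ℕ} (w : Fin (N + 1) → ℝ)
    (hmono : Antitone w) (hnonneg : ∀ i, 0 ≤ w i) (hpos : 0 < w 0) :
    (∀ β : Fin (N + 1) → ℝ, owl w β = 0 ↔ β = 0) ∧
    (∀ (c : ℝ) (β : Fin (N + 1) → ℝ), owl w (c • β) = |c| * owl w β) ∧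
    (∀ x y : Fin (N + 1) → ℝ, owl w (x + y) ≤ owl w x + owl w y) :=
  ⟨Owl.owl_eq_zero_iff hnonneg hpos, Owl.owl_smul w, Owl.owl_add_le hmono hnonneg⟩
end

section
/- For the OWL norm Ω_w with nonincreasing nonnegative weights w and w̄ = (Σ_{j=1}^N w_j)/N > 0, the dual norm Ω_w* satisfies (1/w_1)·‖β‖_∞ ≤ Ω_w*(β) ≤ (1/w̄)·‖β‖_∞ for all β ∈ ℝ^N. -/
open Finset

lemma Antitone.mul_sum_le_mul_sum_Iic {n : ℕ} {w : Fin n → ℝ} (hw : Antitone w) (i : Fin n) :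
    ((i : ℝ) + 1) * ∑ j, w j ≤ n * ∑ j ∈ Iic i, w j := by
  set A := ∑ j ∈ Iic i, w j
  set B := ∑ j ∈ (Iic i)ᶜ, w j
  have hcard : (#(Iic i)ᶜ : ℝ) + ((i : ℝ) + 1) = n := by
    have : #(Iic i)ᶜ + #(Iic i) = n := by rw [card_compl_add_card, Fintype.card_fin]
    rw [Fin.card_Iic] at this
    exact_mod_cast this
  have hA : ((i : ℝ) + 1) * w i ≤ A := by
    simpa [Fin.card_Iic] using card_nsmul_le_sum (Iic i) w (w i) fun j hj => hw (mem_Iic.mp hj)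
  have hB : B ≤ #(Iic i)ᶜ * w i := by
    simpa using sum_le_card_nsmul (Iic i)ᶜ w (w i) fun j hj =>
      hw (not_le.mp (by simpa using hj)).le
  have hi : (0 : ℝ) ≤ (i : ℝ) + 1 := by positivity
  rw [← sum_add_sum_compl (Iic i), ← hcard]
  nlinarith [mul_le_mul_of_nonneg_left hA (Nat.cast_nonneg (α := ℝ) #(Iic i)ᶜ),
    mul_le_mul_of_nonneg_left hB hi]

lemma owlSorted_le_sup' {n : ℕ} (β : Fin n → ℝ) (h : (univ : Finset (Fin n)).Nonempty)
    (j : Fin n) : owlSorted β j ≤ univ.sup' h fun i => |β i| :=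
  le_sup' (fun i => |β i|) (mem_univ _)

lemma owlSorted_zero {N : ℕ} (β : Fin (N + 1) → ℝ) :
    owlSorted β 0 = univ.sup' univ_nonempty fun i => |β i| := by
  refine le_antisymm (owlSorted_le_sup' β _ 0) (sup'_le _ _ fun i _ => ?_)
  simpa [owlSorted, Fin.rev_zero] using
    Tuple.monotone_sort (fun j => |β j|) (Fin.le_last ((Tuple.sort fun j => |β j|).symm i))

lemma le_owlDual {M : ℕ} (v z : Fin M → ℝ) (i : Fin M) :
    (∑ j ∈ Iic i, v j)⁻¹ * ∑ j ∈ Iic i, owlSorted z j ≤ owlDual v z := by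
  unfold owlDual
  simp only [filter_ge_eq_Iic]
  exact le_ciSup (f := fun i => (∑ j ∈ Iic i, v j)⁻¹ * ∑ j ∈ Iic i, owlSorted z j)
    (Finite.bddAbove_range _) i

lemma owlDual_le {M : ℕ} [NeZero M] {v z : Fin M → ℝ} {c : ℝ}
    (h : ∀ i, (∑ j ∈ Iic i, v j)⁻¹ * ∑ j ∈ Iic i, owlSorted z j ≤ c) : owlDual v z ≤ c := by
  unfold owlDual
  simp only [filter_ge_eq_Iic]
  exact ciSup_le h

theorem stmt_1_general {N : ℕ} (w : Fin (N + 1) → ℝ) (hmono : Antitone w)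
    (wbar : ℝ) (hwbar : wbar = (∑ j, w j) / (N + 1)) (hwbarpos : 0 < wbar)
    (β : Fin (N + 1) → ℝ) :
    (1 / w 0) * (Finset.univ.sup' Finset.univ_nonempty fun i => |β i|) ≤ owlDual w β ∧
    owlDual w β ≤ (1 / wbar) * (Finset.univ.sup' Finset.univ_nonempty fun i => |β i|) := by
  set M := univ.sup' univ_nonempty fun i => |β i|
  constructor
  · have hIic : Iic (0 : Fin (N + 1)) = {0} := by ext j; simp
    simpa [hIic, owlSorted_zero] using le_owlDual w β 0
  · refine owlDual_le fun i => ?_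
    have hw : ((i : ℝ) + 1) * wbar ≤ ∑ j ∈ Iic i, w j := by
      have := hmono.mul_sum_le_mul_sum_Iic i
      rw [hwbar, mul_div_assoc', div_le_iff₀ (by positivity)]
      push_cast at this
      linarith
    have hβ : ∑ j ∈ Iic i, owlSorted β j ≤ ((i : ℝ) + 1) * M := by
      simpa [Fin.card_Iic] using sum_le_card_nsmul (Iic i) _ M fun j _ => owlSorted_le_sup' β _ j
    calc (∑ j ∈ Iic i, w j)⁻¹ * ∑ j ∈ Iic i, owlSorted β j
        ≤ (((i : ℝ) + 1) * wbar)⁻¹ * (((i : ℝ) + 1) * M) :=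
          mul_le_mul (inv_anti₀ (by positivity) hw) hβ
            (sum_nonneg fun j _ => abs_nonneg _) (by positivity)
      _ = 1 / wbar * M := by field_simp

theorem stmt_1 {N : ℕ} (w : Fin (N + 1) → ℝ) (hmono : Antitone w)
    (hnonneg : ∀ i, 0 ≤ w i) (hpos : 0 < w 0)
    (wbar : ℝ) (hwbar : wbar = (∑ j, w j) / (N + 1)) (hwbarpos : 0 < wbar)
    (β : Fin (N + 1) → ℝ) :
    (1 / w 0) * (Finset.univ.sup' Finset.univ_nonempty fun i => |β i|) ≤ owlDual w β ∧
    owlDual w β ≤ (1 / wbar) * (Finset.univ.sup' Finset.univ_nonempty fun i => |β i|) :=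
  stmt_1_general w hmono wbar hwbar hwbarpos β
end

section
/- Sorted-weights subadditivity: for the OWL norm Ω_w with nonincreasing nonnegative weights, Ω_w(x + y) ≤ Ω_w(x) + Ω_w(y) for all x, y ∈ ℝ^N. -/
lemma owlSorted_antitone {N : ℕ} (β : Fin N → ℝ) : Antitone (owlSorted β) := by
  intro i j hij
  have h := Tuple.monotone_sort (fun j => |β j|) (Fin.rev_le_rev.2 hij)
  simpa [owlSorted, Function.comp] using h

lemma owl_perm_le {N : ℕ} (w : Fin N → ℝ) (hmono : Antitone w)
    (β : Fin N → ℝ) (τ : Equiv.Perm (Fin N)) :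
    ∑ i, w i * |β (τ i)| ≤ owl w β := by
  set e : Equiv.Perm (Fin N) := (Fin.revPerm).trans (Tuple.sort (fun j => |β j|))
  have he : ∀ i, owlSorted β i = |β (e i)| := fun i => rfl
  have hmv : Monovary w (owlSorted β) :=
    hmono.monovary (owlSorted_antitone β)
  have key := hmv.sum_mul_comp_perm_le_sum_mul (σ := τ.trans e.symm)
  calc ∑ i, w i * |β (τ i)|
      = ∑ i, w i * owlSorted β ((τ.trans e.symm) i) := by
        refine Finset.sum_congr rfl fun i _ => ?_
        rw [he]
        simp
    _ ≤ ∑ i, w i * owlSorted β i := key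
    _ = owl w β := rfl

theorem stmt_17 {N : ℕ} (w : Fin N → ℝ) (hmono : Antitone w)
    (hnonneg : ∀ i, 0 ≤ w i) (x y : Fin N → ℝ) :
    owl w (x + y) ≤ owl w x + owl w y := by
  set e : Equiv.Perm (Fin N) :=
    (Fin.revPerm).trans (Tuple.sort (fun j => |(x + y) j|))
  have h1 : owl w (x + y) = ∑ i, w i * |(x + y) (e i)| := rfl
  calc owl w (x + y) = ∑ i, w i * |(x + y) (e i)| := h1
    _ ≤ ∑ i, (w i * |x (e i)| + w i * |y (e i)|) := by
        refine Finset.sum_le_sum fun i _ => ?_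
        rw [← mul_add]
        exact mul_le_mul_of_nonneg_left (abs_add_le _ _) (hnonneg i)
    _ = (∑ i, w i * |x (e i)|) + ∑ i, w i * |y (e i)| := Finset.sum_add_distrib
    _ ≤ owl w x + owl w y :=
        add_le_add (owl_perm_le w hmono x e) (owl_perm_le w hmono y e)
end

section
/- If X has columns drawn from a union of pairwise orthogonal subspaces S_1 ⊥ ... ⊥ S_L, y ∈ S_ℓ, and β̂ minimizes (1/2)‖y − Xβ‖² + Ω_w(β), then β̂_j = 0 for every column x_j not in S_ℓ. -/
private lemma sortedAbs_le {N : ℕ} (f g : Fin N → ℝ) (h : ∀ j, |f j| ≤ |g j|)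
    (k : Fin N) :
    |f (Tuple.sort (fun j => |f j|) k)| ≤ |g (Tuple.sort (fun j => |g j|) k)| := by
  classical
  set a : Fin N → ℝ := fun j => |f j| with ha
  set b : Fin N → ℝ := fun j => |g j| with hb
  set σa := Tuple.sort a
  set σb := Tuple.sort b
  show a (σa k) ≤ b (σb k)
  by_contra hlt
  push_neg at hlt
  have hsub1 : (Finset.Iic k).map σb.toEmbedding ⊆
      Finset.univ.filter (fun j => a j < a (σa k)) := by
    intro j hj
    simp only [Finset.mem_map, Finset.mem_Iic] at hj
    obtain ⟨m, hm, rfl⟩ := hj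
    have h1 : b (σb m) ≤ b (σb k) := Tuple.monotone_sort b hm
    have h2 : a (σb m) ≤ b (σb m) := h _
    simp only [Finset.mem_filter, Finset.mem_univ, true_and]
    exact lt_of_le_of_lt (h2.trans h1) hlt
  have hsub2 : Finset.univ.filter (fun j => a j < a (σa k)) ⊆
      (Finset.Iio k).map σa.toEmbedding := by
    intro j hj
    simp only [Finset.mem_filter, Finset.mem_univ, true_and] at hj
    simp only [Finset.mem_map, Finset.mem_Iio]
    refine ⟨σa.symm j, ?_, σa.apply_symm_apply j⟩
    by_contra hkm
    push_neg at hkm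
    have := Tuple.monotone_sort a hkm
    rw [Function.comp_apply, Function.comp_apply, σa.apply_symm_apply] at this
    exact absurd hj (not_lt.mpr this)
  have hcard := (Finset.card_le_card (hsub1.trans hsub2))
  rw [Finset.card_map, Finset.card_map, Fin.card_Iic, Fin.card_Iio] at hcard
  omega

private lemma owlSorted_le {N : ℕ} (f g : Fin N → ℝ) (h : ∀ j, |f j| ≤ |g j|)
    (i : Fin N) : owlSorted f i ≤ owlSorted g i :=
  sortedAbs_le f g h i.rev

private lemma sum_owlSorted {N : ℕ} (f : Fin N → ℝ) :
    ∑ i, owlSorted f i = ∑ j, |f j| := by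
  classical
  simpa [owlSorted, Fin.revPerm_apply] using
    Equiv.sum_comp (Fin.revPerm.trans (Tuple.sort (fun j => |f j|))) (fun j => |f j|)

private lemma owl_lt {N : ℕ} (w f g : Fin N → ℝ) (hw : ∀ i, 0 < w i)
    (h : ∀ j, |f j| ≤ |g j|) (hs : ∑ j, |f j| < ∑ j, |g j|) :
    owl w f < owl w g := by
  classical
  have hsum : ∑ i, owlSorted f i < ∑ i, owlSorted g i := by
    rw [sum_owlSorted, sum_owlSorted]; exact hs
  obtain ⟨i, _, hi⟩ := Finset.exists_lt_of_sum_lt hsum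
  refine Finset.sum_lt_sum (fun i _ => ?_) ⟨i, Finset.mem_univ i, ?_⟩
  · exact mul_le_mul_of_nonneg_left (owlSorted_le f g h i) (hw i).le
  · exact mul_lt_mul_of_pos_left hi (hw i)

open RealInnerProductSpace in
theorem stmt_19 {n N L : ℕ} (S : Fin L → Submodule ℝ (EuclideanSpace ℝ (Fin n)))
    (horth : ∀ k l, k ≠ l → ∀ u ∈ S k, ∀ v ∈ S l, ⟪u, v⟫ = 0)
    (x : Fin N → EuclideanSpace ℝ (Fin n)) (c : Fin N → Fin L)
    (hx : ∀ j, x j ∈ S (c j))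
    (ℓ : Fin L) (y : EuclideanSpace ℝ (Fin n)) (hy : y ∈ S ℓ)
    (w : Fin N → ℝ) (hanti : Antitone w) (hpos : ∀ i, 0 < w i)
    (βh : Fin N → ℝ)
    (hmin : ∀ β : Fin N → ℝ,
      (1 / 2) * ‖y - ∑ j, βh j • x j‖ ^ 2 + owl w βh ≤
      (1 / 2) * ‖y - ∑ j, β j • x j‖ ^ 2 + owl w β) :
    ∀ j, x j ∉ S ℓ → βh j = 0 := by
  classical
  intro j₀ hj₀
  by_contra hne
  set β' : Fin N → ℝ := fun j => if x j ∈ S ℓ then βh j else 0 with hβ'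
  -- owl strictly decreases
  have habs : ∀ j, |β' j| ≤ |βh j| := by
    intro j
    simp only [hβ']
    split <;> simp [abs_nonneg]
  have hsumlt : ∑ j, |β' j| < ∑ j, |βh j| := by
    refine Finset.sum_lt_sum (fun j _ => habs j) ⟨j₀, Finset.mem_univ j₀, ?_⟩
    simp only [hβ', if_neg hj₀, abs_zero]
    exact abs_pos.mpr hne
  have howl : owl w β' < owl w βh := owl_lt w β' βh hpos habs hsumlt
  -- residual does not increase
  set a : EuclideanSpace ℝ (Fin n) := y - ∑ j, β' j • x j with haa
  set b : EuclideanSpace ℝ (Fin n) := ∑ j, (βh j - β' j) • x j with hbb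
  have hres : y - ∑ j, βh j • x j = a - b := by
    simp only [haa, hbb, sub_smul, Finset.sum_sub_distrib]
    abel
  have ha : a ∈ S ℓ := by
    refine Submodule.sub_mem _ hy (Submodule.sum_mem _ fun j _ => ?_)
    simp only [hβ']
    split
    · exact Submodule.smul_mem _ _ ‹_›
    · simp [Submodule.zero_mem]
  have hab : ⟪a, b⟫ = 0 := by
    rw [hbb, inner_sum]
    refine Finset.sum_eq_zero fun j _ => ?_
    rw [real_inner_smul_right]
    by_cases hj : x j ∈ S ℓ
    · simp [hβ', hj]
    · have hcj : ℓ ≠ c j := fun h => hj (h ▸ hx j)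
      rw [horth ℓ (c j) hcj a ha (x j) (hx j), mul_zero]
  have hexp : ‖a - b‖ ^ 2 = ‖a‖ ^ 2 - 2 * ⟪a, b⟫ + ‖b‖ ^ 2 := norm_sub_sq_real a b
  have hnorm : ‖a‖ ^ 2 ≤ ‖y - ∑ j, βh j • x j‖ ^ 2 := by
    rw [hres, hexp, hab]
    nlinarith [sq_nonneg ‖b‖]
  have := hmin β'
  rw [← haa] at this
  nlinarith
end
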